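/- arXiv:2511.13608 — 3 statements merged into one kernel-verified Lean document; each statement's English description precedes it below -/
import Mathlib

section
/- Let S_1,...,S_n, S_{n+1} be exchangeable real-valued random variables. Define q̂ as the ⌈(1-α)(n+1)⌉-th smallest value among S_1,...,S_n. Then P(S_{n+1} ≤ q̂) ≥ 1-α. -/
open MeasureTheory Finset
open scoped ENNReal

section ConformalHelpers

variable {ι : Type*} [Fintype ι]

lemma conformal_T_eq_Ici (x : ι → ℝ) (k : ℕ) (hk1 : 1 ≤ k) (hk : k ≤ Fintype.card ι) :
    ∃ m₀ : ℝ, {t : ℝ | k ≤ (Finset.univ.filter (fun i => x i ≤ t)).card} = Set.Ici m₀ := by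
  classical
  have hne : Nonempty ι := Fintype.card_pos_iff.mp (lt_of_lt_of_le hk1 hk)
  set A : Finset ℝ := Finset.univ.image x with hA
  have hAne : A.Nonempty := ⟨x (Classical.arbitrary ι), mem_image_of_mem x (mem_univ _)⟩
  set B : Finset ℝ := A.filter (fun a => k ≤ (Finset.univ.filter (fun i => x i ≤ a)).card) with hB
  have hBne : B.Nonempty := by
    refine ⟨A.max' hAne, mem_filter.mpr ⟨A.max'_mem hAne, ?_⟩⟩
    have : (Finset.univ : Finset ι).filter (fun i => x i ≤ A.max' hAne) = Finset.univ := by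
      refine filter_true_of_mem (fun i _ => ?_)
      exact A.le_max' _ (mem_image_of_mem x (mem_univ _))
    rw [this, card_univ]; exact hk
  refine ⟨B.min' hBne, ?_⟩
  ext t
  constructor
  · intro ht
    have hFne : ((Finset.univ : Finset ι).filter (fun i => x i ≤ t)).Nonempty := by
      rw [← card_pos]; exact lt_of_lt_of_le hk1 ht
    set F := (Finset.univ : Finset ι).filter (fun i => x i ≤ t) with hF
    set G := F.image x with hG
    have hGne : G.Nonempty := hFne.image x
    set a := G.max' hGne with ha
    have hat : a ≤ t := by
      obtain ⟨i, hi, hxi⟩ := mem_image.mp (G.max'_mem hGne)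
      rw [ha, ← hxi]; exact (mem_filter.mp hi).2
    have haB : a ∈ B := by
      refine mem_filter.mpr ⟨?_, ?_⟩
      · obtain ⟨i, hi, hxi⟩ := mem_image.mp (G.max'_mem hGne)
        rw [ha, ← hxi]
        exact mem_image_of_mem x (mem_univ _)
      · refine le_trans ht (card_le_card ?_)
        intro i hi
        refine mem_filter.mpr ⟨mem_univ _, ?_⟩
        exact G.le_max' _ (mem_image_of_mem x hi)
    exact le_trans (B.min'_le _ haB) hat
  · intro ht
    have hmB := mem_filter.mp (B.min'_mem hBne)
    refine le_trans hmB.2 (card_le_card ?_)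
    intro i hi
    exact mem_filter.mpr ⟨mem_univ _, le_trans (mem_filter.mp hi).2 ht⟩

lemma conformal_sInf_mem (x : ι → ℝ) (k : ℕ) (hk1 : 1 ≤ k) (hk : k ≤ Fintype.card ι) :
    k ≤ (Finset.univ.filter (fun i => x i ≤
      sInf {t : ℝ | k ≤ (Finset.univ.filter (fun i => x i ≤ t)).card})).card := by
  obtain ⟨m₀, hm⟩ := conformal_T_eq_Ici x k hk1 hk
  have hs : sInf {t : ℝ | k ≤ (Finset.univ.filter (fun i => x i ≤ t)).card} = m₀ := by
    rw [hm, csInf_Ici]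
  rw [hs]
  have : m₀ ∈ Set.Ici m₀ := Set.self_mem_Ici
  rw [← hm] at this
  exact this

lemma conformal_strict_lt (x : ι → ℝ) (k : ℕ) (hk1 : 1 ≤ k) (hk : k ≤ Fintype.card ι) :
    (Finset.univ.filter (fun i => x i <
      sInf {t : ℝ | k ≤ (Finset.univ.filter (fun i => x i ≤ t)).card})).card < k := by
  classical
  obtain ⟨m₀, hm⟩ := conformal_T_eq_Ici x k hk1 hk
  have hs : sInf {t : ℝ | k ≤ (Finset.univ.filter (fun i => x i ≤ t)).card} = m₀ := by
    rw [hm, csInf_Ici]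
  rw [hs]
  by_contra hcon
  push_neg at hcon
  have hFne : ((Finset.univ : Finset ι).filter (fun i => x i < m₀)).Nonempty := by
    rw [← card_pos]; exact lt_of_lt_of_le hk1 hcon
  set G := ((Finset.univ : Finset ι).filter (fun i => x i < m₀)).image x with hG
  have hGne : G.Nonempty := hFne.image x
  set a := G.max' hGne with ha
  have ham : a < m₀ := by
    obtain ⟨i, hi, hxi⟩ := mem_image.mp (G.max'_mem hGne)
    rw [ha, ← hxi]; exact (mem_filter.mp hi).2
  have haT : a ∈ Set.Ici m₀ := by
    rw [← hm]
    refine le_trans hcon (card_le_card ?_)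
    intro i hi
    exact mem_filter.mpr ⟨mem_univ _, G.le_max' _ (mem_image_of_mem x (by simpa using hi))⟩
  exact absurd haT (not_le.mpr ham)

/-- Pointwise counting: at least `k` indices have strict rank `< k`. -/
lemma conformal_count_low (x : ι → ℝ) (k : ℕ) (hk1 : 1 ≤ k) (hk : k ≤ Fintype.card ι) :
    k ≤ (Finset.univ.filter (fun j =>
      (Finset.univ.filter (fun i => x i < x j)).card < k)).card := by
  classical
  refine le_trans (conformal_sInf_mem x k hk1 hk) (card_le_card ?_)
  intro j hj
  refine mem_filter.mpr ⟨mem_univ _, ?_⟩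
  refine lt_of_le_of_lt (card_le_card ?_) (conformal_strict_lt x k hk1 hk)
  intro i hi
  exact mem_filter.mpr ⟨mem_univ _, lt_of_lt_of_le (mem_filter.mp hi).2 (mem_filter.mp hj).2⟩

/-- Pointwise event equivalence for the last coordinate. -/
lemma conformal_event_iff (n : ℕ) (x : Fin (n+1) → ℝ) (k : ℕ)
    (hk1 : 1 ≤ k) (hkn : k ≤ n) :
    x (Fin.last n) ≤ sInf {t : ℝ | k ≤ (Finset.univ.filter
        (fun i : Fin n => x i.castSucc ≤ t)).card} ↔
      (Finset.univ.filter (fun i : Fin n => x i.castSucc < x (Fin.last n))).card < k := by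
  classical
  set y : Fin n → ℝ := fun i => x i.castSucc with hy
  have hcard : k ≤ Fintype.card (Fin n) := by simpa using hkn
  set m₀ := sInf {t : ℝ | k ≤ (Finset.univ.filter (fun i : Fin n => y i ≤ t)).card} with hm₀
  constructor
  · intro h
    refine lt_of_le_of_lt (card_le_card ?_) (conformal_strict_lt y k hk1 hcard)
    intro i hi
    exact mem_filter.mpr ⟨mem_univ _, lt_of_lt_of_le (mem_filter.mp hi).2 h⟩
  · intro h
    by_contra hcon
    push_neg at hcon
    have hmem := conformal_sInf_mem y k hk1 hcard
    have hsub : (Finset.univ.filter (fun i : Fin n => y i ≤ m₀)) ⊆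
        (Finset.univ.filter (fun i : Fin n => y i < x (Fin.last n))) := by
      intro i hi
      exact mem_filter.mpr ⟨mem_univ _, lt_of_le_of_lt (mem_filter.mp hi).2 hcon⟩
    exact absurd (le_trans hmem (card_le_card hsub)) (not_le.mpr h)

/-- reindexing a filter-count along a permutation -/
lemma card_filter_perm [DecidableEq ι] (π : Equiv.Perm ι) (p : ι → Prop) [DecidablePred p] :
    (Finset.univ.filter (fun i => p (π i))).card = (Finset.univ.filter p).card := by
  refine Finset.card_bij (fun i _ => π i) ?_ ?_ ?_
  · intro a ha; exact mem_filter.mpr ⟨mem_univ _, (mem_filter.mp ha).2⟩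
  · intro a _ b _ h; exact π.injective h
  · intro b hb
    exact ⟨π.symm b, mem_filter.mpr ⟨mem_univ _, by simpa using (mem_filter.mp hb).2⟩, by simp⟩

lemma card_filter_castSucc (n : ℕ) (p : Fin (n+1) → Prop) [DecidablePred p]
    (hlast : ¬ p (Fin.last n)) :
    (Finset.univ.filter p).card = (Finset.univ.filter (fun i : Fin n => p i.castSucc)).card := by
  rw [Finset.card_filter, Finset.card_filter, Fin.sum_univ_castSucc]
  simp [hlast]

/-- measurability of the rank function -/
lemma measurable_rank [DecidableEq ι] (j : ι) :
    Measurable (fun x : ι → ℝ => (Finset.univ.filter (fun i => x i < x j)).card) := by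
  classical
  have : (fun x : ι → ℝ => (Finset.univ.filter (fun i => x i < x j)).card)
      = fun x => ∑ i : ι, if x i < x j then 1 else 0 := by
    funext x; rw [Finset.card_filter]
  rw [this]
  refine Finset.measurable_sum _ (fun i _ => ?_)
  exact Measurable.ite (measurableSet_lt (measurable_pi_apply i) (measurable_pi_apply j))
    measurable_const measurable_const

end ConformalHelpers

/-- Split conformal prediction coverage: if `S 0, …, S n` are exchangeable
real random variables and `q̂` is the `⌈(1-α)(n+1)⌉`-th smallest among the
first `n`, then `P(S_{n+1} ≤ q̂) ≥ 1 - α`. -/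
theorem split_conformal_coverage
    {Ω : Type*} [MeasurableSpace Ω] (P : Measure Ω) [IsProbabilityMeasure P]
    (n : ℕ) (hn : 0 < n) (S : Fin (n + 1) → Ω → ℝ)
    (hmeas : ∀ i, Measurable (S i))
    (hexch : ∀ π : Equiv.Perm (Fin (n + 1)),
      P.map (fun ω => fun i => S (π i) ω) = P.map (fun ω => fun i => S i ω))
    (α : ℝ) (hα : α ∈ Set.Ioo (0 : ℝ) 1)
    (k : ℕ) (hk : k = ⌈(1 - α) * (n + 1)⌉₊) (hkn : k ≤ n)
    (qhat : Ω → ℝ)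
    (hqhat : ∀ ω, qhat ω =
      sInf {t : ℝ | k ≤ (Finset.univ.filter
        (fun i : Fin n => S i.castSucc ω ≤ t)).card}) :
    ENNReal.ofReal (1 - α) ≤ P {ω | S (Fin.last n) ω ≤ qhat ω} := by
  classical
  have hα0 : (0 : ℝ) < 1 - α := by linarith [hα.2]
  have hk1 : 1 ≤ k := by
    rw [hk]
    exact Nat.ceil_pos.mpr (by positivity)
  -- the joint map
  set F : Ω → (Fin (n+1) → ℝ) := fun ω i => S i ω with hF
  have hFmeas : Measurable F := measurable_pi_lambda _ (fun i => hmeas i)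
  -- rank events in the path space
  set C : Fin (n+1) → Set (Fin (n+1) → ℝ) :=
    fun j => {x | (Finset.univ.filter (fun i => x i < x j)).card < k} with hC
  have hCmeas : ∀ j, MeasurableSet (C j) := by
    intro j
    have : C j = (fun x : Fin (n+1) → ℝ =>
        (Finset.univ.filter (fun i => x i < x j)).card) ⁻¹' (Set.Iio k) := rfl
    rw [this]
    exact measurable_rank j measurableSet_Iio
  -- all rank events have the same probability
  have hEeq : ∀ j, P (F ⁻¹' C j) = P (F ⁻¹' C (Fin.last n)) := by
    intro j
    set π : Equiv.Perm (Fin (n+1)) := Equiv.swap (Fin.last n) j with hπ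
    have hπlast : π (Fin.last n) = j := Equiv.swap_apply_left _ _
    have hG : Measurable (fun ω => fun i => S (π i) ω) :=
      measurable_pi_lambda _ (fun i => hmeas (π i))
    have hset : F ⁻¹' C j = (fun ω => fun i => S (π i) ω) ⁻¹' C (Fin.last n) := by
      ext ω
      simp only [Set.mem_preimage, hC, Set.mem_setOf_eq, hF, hπlast]
      rw [card_filter_perm π (fun i => S i ω < S j ω)]
    rw [hset, ← Measure.map_apply hG (hCmeas (Fin.last n)), hexch π,
      Measure.map_apply hFmeas (hCmeas (Fin.last n))]
  -- integrated counting bound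
  have hsum : (k : ℝ≥0∞) ≤ ∑ j : Fin (n+1), P (F ⁻¹' C j) := by
    have hkcard : k ≤ Fintype.card (Fin (n+1)) := by
      simpa using le_trans hkn (Nat.le_succ n)
    calc (k : ℝ≥0∞) = ∫⁻ _, (k : ℝ≥0∞) ∂P := by simp
      _ ≤ ∫⁻ ω, ∑ j : Fin (n+1), (F ⁻¹' C j).indicator (fun _ => (1:ℝ≥0∞)) ω ∂P := by
          refine lintegral_mono (fun ω => ?_)
          have hcount := conformal_count_low (F ω) k hk1 hkcard
          have hind : ∑ j : Fin (n+1), (F ⁻¹' C j).indicator (fun _ => (1:ℝ≥0∞)) ω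
              = ((Finset.univ.filter (fun j =>
                  (Finset.univ.filter (fun i => F ω i < F ω j)).card < k)).card : ℝ≥0∞) := by
            rw [Finset.card_filter, Nat.cast_sum]
            refine Finset.sum_congr rfl (fun j _ => ?_)
            by_cases h : (Finset.univ.filter (fun i => F ω i < F ω j)).card < k
            · simp [Set.indicator_apply, h, hC, Set.mem_preimage, Set.mem_setOf_eq]
            · simp [Set.indicator_apply, h, hC, Set.mem_preimage, Set.mem_setOf_eq]
          rw [hind]
          exact Nat.cast_le.mpr (by convert hcount)
      _ = ∑ j : Fin (n+1), P (F ⁻¹' C j) := by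
          rw [lintegral_finset_sum]
          · refine Finset.sum_congr rfl (fun j _ => ?_)
            rw [show ((F ⁻¹' C j).indicator (fun _ => (1:ℝ≥0∞))) = (F ⁻¹' C j).indicator 1 from rfl,
              lintegral_indicator_one (hFmeas (hCmeas j))]
          · intro j _
            exact measurable_const.indicator (hFmeas (hCmeas j))
  -- hence k ≤ (n+1) ⬝ P(E_last)
  have hmain : (k : ℝ≥0∞) ≤ ((n : ℝ≥0∞) + 1) * P (F ⁻¹' C (Fin.last n)) := by
    refine le_trans hsum ?_
    rw [Finset.sum_congr rfl (fun j _ => hEeq j), Finset.sum_const, card_univ]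
    simp [nsmul_eq_mul]
  -- the target event equals the last rank event
  have hevent : {ω | S (Fin.last n) ω ≤ qhat ω} = F ⁻¹' C (Fin.last n) := by
    ext ω
    simp only [Set.mem_setOf_eq, Set.mem_preimage, hC, hF]
    rw [hqhat ω]
    rw [conformal_event_iff n (F ω) k hk1 hkn]
    rw [card_filter_castSucc n (fun i => F ω i < F ω (Fin.last n)) (lt_irrefl _)]
  rw [hevent]
  -- final arithmetic
  have hreal : (1 - α) * (n + 1) ≤ (k : ℝ) := by rw [hk]; exact Nat.le_ceil _
  have hofk : ENNReal.ofReal (1 - α) * ((n : ℝ≥0∞) + 1) ≤ (k : ℝ≥0∞) := by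
    have h1 : ((n : ℝ≥0∞) + 1) = ENNReal.ofReal ((n : ℝ) + 1) := by
      rw [ENNReal.ofReal_add (by positivity) zero_le_one]
      simp [ENNReal.ofReal_natCast]
    rw [h1, ← ENNReal.ofReal_mul (le_of_lt hα0)]
    calc ENNReal.ofReal ((1 - α) * ((n:ℝ) + 1)) ≤ ENNReal.ofReal (k : ℝ) :=
          ENNReal.ofReal_le_ofReal (by exact_mod_cast hreal)
      _ = (k : ℝ≥0∞) := ENNReal.ofReal_natCast k
  have hne0 : ((n : ℝ≥0∞) + 1) ≠ 0 := by simp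
  have hnetop : ((n : ℝ≥0∞) + 1) ≠ ⊤ := by
    simp [ENNReal.add_ne_top]
  have hfin := le_trans hofk hmain
  rw [mul_comm (ENNReal.ofReal (1 - α)) _] at hfin
  exact (ENNReal.mul_le_mul_iff_right hne0 hnetop).mp hfin
end

section
/- Consider the ACI recursion α_{t+1} = α_t + γ(α − e_t) where e_t ∈ {0,1} for all t, starting from α_1 ∈ [0,1] and with step size γ > 0. Suppose α_t remains in [−γ, 1+γ] for all t (which holds for the standard ACI update). Then for any horizon T ≥ 1, |(1/T)Σ_{t=1}^T e_t − α| ≤ (max{α_1, 1−α_1} + γ)/(T·γ). -/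
open Finset

/-- Finite-time guarantee for the ACI recursion
`α_{t+1} = α_t + γ (α − e_t)`: if the iterates stay in `[−γ, 1+γ]`, then for
any horizon `T ≥ 1`,
`|(1/T) Σ_{t=1}^T e_t − α| ≤ (max{α₁, 1−α₁} + γ)/(T γ)`. -/
theorem aci_finite_time_bound
    (γ α : ℝ) (hγ : 0 < γ)
    (αseq : ℕ → ℝ) (e : ℕ → ℝ)
    (he : ∀ t, e t = 0 ∨ e t = 1)
    (hα1 : αseq 1 ∈ Set.Icc (0 : ℝ) 1)
    (hrec : ∀ t, αseq (t + 1) = αseq t + γ * (α - e t))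
    (hbdd : ∀ t, αseq t ∈ Set.Icc (-γ) (1 + γ))
    (T : ℕ) (hT : 1 ≤ T) :
    |(1 / (T : ℝ)) * ∑ t ∈ Finset.Icc 1 T, e t - α| ≤
      (max (αseq 1) (1 - αseq 1) + γ) / ((T : ℝ) * γ) := by
  have htel : ∀ n : ℕ, αseq (n + 1) = αseq 1 + γ * ∑ t ∈ Finset.Icc 1 n, (α - e t) := by
    intro n
    induction n with
    | zero => simp
    | succ n ih =>
      rw [hrec (n + 1), ih, Finset.sum_Icc_succ_top (by omega)]
      ring
  have hTpos : (0 : ℝ) < T := by exact_mod_cast hT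
  have hsum : ∑ t ∈ Finset.Icc 1 T, (α - e t) = T * α - ∑ t ∈ Finset.Icc 1 T, e t := by
    rw [Finset.sum_sub_distrib, Finset.sum_const, Nat.card_Icc]
    simp
  have key : (1 / (T : ℝ)) * ∑ t ∈ Finset.Icc 1 T, e t - α
      = (αseq 1 - αseq (T + 1)) / ((T : ℝ) * γ) := by
    have h := htel T
    rw [hsum] at h
    field_simp
    nlinarith [h]
  rw [key, abs_div, abs_of_pos (by positivity : (0:ℝ) < (T : ℝ) * γ)]
  apply (div_le_div_iff_of_pos_right (by positivity)).mpr
  have hb := hbdd (T + 1)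
  simp only [Set.mem_Icc] at hb hα1
  rw [abs_le]
  constructor
  · have := le_max_right (αseq 1) (1 - αseq 1)
    linarith [hb.2]
  · have := le_max_left (αseq 1) (1 - αseq 1)
    linarith [hb.1]
end

section
/- If the ACI recursion α_{t+1} = α_t + γ(α − e_t) with e_t ∈ {0,1} satisfies α_t ∈ [−γ, 1+γ] for all t, then almost surely lim_{T→∞} (1/T)Σ_{t=1}^T e_t = α. -/
open Finset Filter

lemma aci_telescope (γ α : ℝ) (αseq : ℕ → ℝ) (e : ℕ → ℝ)
    (hrec : ∀ t, αseq (t + 1) = αseq t + γ * (α - e t)) :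
    ∀ T : ℕ, ∑ t ∈ Finset.Icc 1 T, γ * (α - e t) = αseq (T + 1) - αseq 1 := by
  intro T
  induction T with
  | zero => simp
  | succ n ih =>
    rw [Finset.sum_Icc_succ_top (by omega : 1 ≤ n + 1), ih, hrec (n + 1)]
    ring

/-- Asymptotic validity of ACI: if the iterates of the recursion
`α_{t+1} = α_t + γ (α − e_t)` stay in `[−γ, 1+γ]`, then the long-run empirical
miscoverage frequency converges to `α`. -/
theorem aci_long_run_coverage
    (γ α : ℝ) (hγ : 0 < γ)
    (αseq : ℕ → ℝ) (e : ℕ → ℝ)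
    (he : ∀ t, e t = 0 ∨ e t = 1)
    (hrec : ∀ t, αseq (t + 1) = αseq t + γ * (α - e t))
    (hbdd : ∀ t, αseq t ∈ Set.Icc (-γ) (1 + γ)) :
    Tendsto (fun T : ℕ => (1 / (T : ℝ)) * ∑ t ∈ Finset.Icc 1 T, e t)
      atTop (nhds α) := by
  have hsum : ∀ T : ℕ, ∑ t ∈ Finset.Icc 1 T, e t
      = T * α - (αseq (T + 1) - αseq 1) / γ := by
    intro T
    have h := aci_telescope γ α αseq e hrec T
    rw [← Finset.mul_sum] at h
    have h2 : ∑ t ∈ Finset.Icc 1 T, (α - e t)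
        = (T : ℝ) * α - ∑ t ∈ Finset.Icc 1 T, e t := by
      rw [Finset.sum_sub_distrib, Finset.sum_const, Nat.card_Icc]
      simp
    rw [h2] at h
    have h3 : (αseq (T + 1) - αseq 1) / γ
        = (T : ℝ) * α - ∑ t ∈ Finset.Icc 1 T, e t := by
      rw [div_eq_iff hγ.ne', mul_comm]
      exact h.symm
    linarith [h3]
  -- the error term
  have key : ∀ᶠ T : ℕ in atTop,
      (1 / (T : ℝ)) * ∑ t ∈ Finset.Icc 1 T, e t
        = α - (αseq (T + 1) - αseq 1) / γ / T := by
    filter_upwards [eventually_ge_atTop 1] with T hT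
    have hT0 : (T : ℝ) ≠ 0 := by positivity
    rw [hsum T]
    field_simp
  rw [tendsto_congr' key]
  have h0 : Tendsto (fun T : ℕ => (αseq (T + 1) - αseq 1) / γ / T) atTop (nhds 0) := by
    apply squeeze_zero_norm (a := fun T : ℕ => ((1 + 2*γ) / γ) / T) ?_ ?_
    · intro T
      have h1 := hbdd (T + 1)
      have h2 := hbdd 1
      simp only [Set.mem_Icc] at h1 h2
      rcases Nat.eq_zero_or_pos T with h | h
      · simp [h]
      · have hT0 : (0:ℝ) < T := by exact_mod_cast h
        have hb : |αseq (T + 1) - αseq 1| ≤ 1 + 2*γ := by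
          rw [abs_le]; constructor <;> linarith
        rw [Real.norm_eq_abs, abs_div, abs_div, abs_of_pos hγ, abs_of_pos hT0]
        exact div_le_div_of_nonneg_right
          (div_le_div_of_nonneg_right hb hγ.le) hT0.le
    · have := tendsto_natCast_atTop_atTop (R := ℝ)
      simpa using Tendsto.const_div_atTop this ((1 + 2*γ) / γ)
  have := Tendsto.const_sub α h0
  simpa using this
end
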